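/- arXiv:1912.07299 — 3 statements merged into one kernel-verified Lean document; each statement's English description precedes it below -/
import Mathlib

section
/- Let ψ be the Haar wavelet, defined by ψ(t) = 1 for 0 ≤ t < 1/2, ψ(t) = -1 for 1/2 ≤ t < 1, and ψ(t) = 0 otherwise. Let f : ℝ → ℝ be continuous and bounded, and let T > 0. If the continuous wavelet transform Wf(u, 2T) = 0 for all u ∈ ℝ, then f is T-periodic, i.e., f(t+T) = f(t) for all t ∈ ℝ. -/
open MeasureTheory

/-- The Haar wavelet. -/
noncomputable def haar (t : ℝ) : ℝ :=
  if 0 ≤ t ∧ t < 1 / 2 then 1 else if 1 / 2 ≤ t ∧ t < 1 then -1 else 0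

/-- If f is continuous and bounded and its Haar CWT at scale 2T
vanishes for all times u, then f is T-periodic. -/
theorem haar_cwt_vanishes_implies_periodic
    (f : ℝ → ℝ) (hf : Continuous f) (M : ℝ) (hbd : ∀ t : ℝ, |f t| ≤ M)
    (T : ℝ) (hT : 0 < T)
    (hW : ∀ u : ℝ,
      (∫ t : ℝ, f t * haar ((t - u) / (2 * T)) / Real.sqrt (2 * T)) = 0) :
    ∀ t : ℝ, f (t + T) = f t := by
  have h2T : (0:ℝ) < 2 * T := by linarith
  have hsqrt : Real.sqrt (2 * T) ≠ 0 := (Real.sqrt_pos.mpr h2T).ne'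
  -- Step 1: the CWT condition gives equality of adjacent interval integrals
  have key : ∀ u : ℝ, (∫ t in u..(u+T), f t) = ∫ t in (u+T)..(u+2*T), f t := by
    intro u
    have hpt : ∀ t : ℝ, f t * haar ((t - u) / (2 * T)) / Real.sqrt (2 * T)
        = ((Set.Ico u (u+T)).indicator f t - (Set.Ico (u+T) (u+2*T)).indicator f t)
            / Real.sqrt (2*T) := by
      intro t
      have e1 : (0 ≤ (t-u)/(2*T) ∧ (t-u)/(2*T) < 1/2) ↔ (u ≤ t ∧ t < u + T) := by
        rw [le_div_iff₀ h2T, div_lt_iff₀ h2T]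
        constructor <;> rintro ⟨h1, h2⟩ <;> constructor <;> linarith
      have e2 : ((1:ℝ)/2 ≤ (t-u)/(2*T) ∧ (t-u)/(2*T) < 1) ↔ (u + T ≤ t ∧ t < u + 2*T) := by
        rw [div_le_div_iff₀ (by norm_num) h2T, div_lt_iff₀ h2T]
        constructor <;> rintro ⟨h1, h2⟩ <;> constructor <;> linarith
      unfold haar
      simp only [e1, e2, Set.indicator_apply, Set.mem_Ico]
      by_cases h1 : u ≤ t ∧ t < u + T
      · have h2 : ¬ (u + T ≤ t ∧ t < u + 2*T) := by rintro ⟨h3, _⟩; linarith [h1.2]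
        rw [if_pos h1, if_pos h1, if_neg h2]
        ring
      · rw [if_neg h1, if_neg h1]
        by_cases h2 : u + T ≤ t ∧ t < u + 2*T
        · rw [if_pos h2, if_pos h2]; ring
        · rw [if_neg h2, if_neg h2]; ring
    have hi1 : IntegrableOn f (Set.Ico u (u+T)) :=
      (hf.integrableOn_Icc).mono_set Set.Ico_subset_Icc_self
    have hi2 : IntegrableOn f (Set.Ico (u+T) (u+2*T)) :=
      (hf.integrableOn_Icc).mono_set Set.Ico_subset_Icc_self
    have hW' := hW u
    simp only [hpt] at hW'
    rw [integral_div, div_eq_zero_iff] at hW'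
    rcases hW' with hW' | hW'
    · rw [integral_sub (hi1.integrable_indicator measurableSet_Ico)
        (hi2.integrable_indicator measurableSet_Ico),
        integral_indicator measurableSet_Ico, integral_indicator measurableSet_Ico,
        integral_Ico_eq_integral_Ioo, integral_Ico_eq_integral_Ioo, sub_eq_zero] at hW'
      rw [intervalIntegral.integral_of_le (by linarith),
        intervalIntegral.integral_of_le (by linarith),
        integral_Ioc_eq_integral_Ioo, integral_Ioc_eq_integral_Ioo]
      exact hW'
    · exact absurd hW' hsqrt
  -- Step 2: the difference h has vanishing integral over every window of length T
  set h : ℝ → ℝ := fun u => f (u + T) - f u with hh_def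
  have hh : Continuous h := (hf.comp (continuous_id.add continuous_const)).sub hf
  have hint : ∀ u : ℝ, (∫ t in u..(u+T), h t) = 0 := by
    intro u
    have : (∫ t in u..(u+T), h t)
        = (∫ t in u..(u+T), f (t + T)) - ∫ t in u..(u+T), f t :=
      intervalIntegral.integral_sub
        ((hf.comp (continuous_id.add continuous_const)).intervalIntegrable _ _)
        (hf.intervalIntegrable _ _)
    rw [this, intervalIntegral.integral_comp_add_right f T]
    have : u + T + T = u + 2*T := by ring
    rw [this, ← key u, sub_self]
  -- Step 3: the antiderivative G of h satisfies G(u+T) = G(u)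
  set G : ℝ → ℝ := fun u => ∫ x in (0:ℝ)..u, h x with hG_def
  have hGper : ∀ u : ℝ, G (u + T) = G u := by
    intro u
    have := intervalIntegral.integral_add_adjacent_intervals
      (hh.intervalIntegrable 0 u : IntervalIntegrable h volume 0 u)
      (hh.intervalIntegrable u (u+T) : IntervalIntegrable h volume u (u+T))
    simp only [hG_def]
    rw [← this, hint u, add_zero]
  have hd : ∀ b : ℝ, HasDerivAt G (h b) b := fun b =>
    (hh.integral_hasStrictDerivAt 0 b).hasDerivAt
  -- Step 4: h is T-periodic
  have hper : ∀ u : ℝ, h (u + T) = h u := by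
    intro u
    have hcomp : HasDerivAt (fun x => G (x + T)) (h (u + T) * 1) u :=
      by have := (hd (u + T)).comp u ((hasDerivAt_id u).add_const T); exact this
    have heq : (fun x => G (x + T)) = G := funext hGper
    rw [heq] at hcomp
    have := hcomp.unique (hd u)
    linarith [this]
  -- Step 5: f(u + n*T) = f u + n * h u
  have hiter : ∀ (u : ℝ) (n : ℕ), f (u + n * T) = f u + n * h u := by
    intro u n
    induction n with
    | zero => simp
    | succ n ih =>
      have hpern : ∀ m : ℕ, h (u + m * T) = h u := by
        intro m
        induction m with
        | zero => simp
        | succ m ihm =>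
          have : u + (m + 1 : ℕ) * T = (u + m * T) + T := by push_cast; ring
          rw [this, hper, ihm]
      have e : u + ((n:ℕ) + 1 : ℕ) * T = (u + n * T) + T := by push_cast; ring
      have : f ((u + n * T) + T) = f (u + n * T) + h (u + n * T) := by
        simp only [hh_def]; ring
      rw [e, this, hpern n, ih]
      push_cast; ring
  -- Step 6: boundedness forces h = 0
  intro t
  have hzero : h t = 0 := by
    by_contra hne
    have hpos : 0 < |h t| := abs_pos.mpr hne
    obtain ⟨n, hn⟩ := exists_nat_gt ((2 * M) / |h t|)
    have hnle : (n : ℝ) * |h t| ≤ 2 * M := by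
      have h1 := hiter t n
      have h2 := hbd (t + n * T)
      have h3 := hbd t
      have : |(n : ℝ) * h t| ≤ 2 * M := by
        have : (n : ℝ) * h t = f (t + n * T) - f t := by rw [h1]; ring
        rw [this]
        calc |f (t + n * T) - f t| ≤ |f (t + n * T)| + |f t| := abs_sub _ _
          _ ≤ 2 * M := by linarith
      rwa [abs_mul, Nat.abs_cast] at this
    rw [div_lt_iff₀ hpos] at hn
    linarith
  have := hzero
  simp only [hh_def] at this
  linarith
end

section
/- Let f : ℝ → ℝ be continuous and bounded. Define g(u) := ∫_u^{u+1} f(t) dt. If g(u) = g(u+1) for all u ∈ ℝ (i.e., g is 1-periodic), then g is constant. -/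
/-!
Telescoping the 1-periodic window integral `g` gives `∫_u^{u+n} f = n g(u)`. Two windows of the
same length `n` starting at `u` and `v` differ only on two end pieces of length `|u - v|`, so
`n |g u - g v| ≤ 2 M |u - v|` for every `n`, which forces `g u = g v`.
-/

open MeasureTheory intervalIntegral Function

theorem nonpos_of_forall_nat_mul_le {K : Type*} [Field K] [LinearOrder K] [IsStrictOrderedRing K]
    [Archimedean K] {a C : K} (h : ∀ n : ℕ, n * a ≤ C) : a ≤ 0 := by
  by_contra! ha
  obtain ⟨n, hn⟩ := exists_nat_gt (C / a)
  exact (h n).not_gt ((div_lt_iff₀ ha).mp hn)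

section

variable {f : ℝ → ℝ}

theorem abs_integral_le_mul_abs_sub {M : ℝ} (hbd : ∀ t, |f t| ≤ M) (a b : ℝ) :
    |∫ t in a..b, f t| ≤ M * |b - a| := by
  simpa only [Real.norm_eq_abs] using norm_integral_le_of_norm_le_const (f := f) fun t _ => hbd t

theorem abs_integral_translate_sub_le (hf : ∀ a b, IntervalIntegrable f volume a b) {M : ℝ}
    (hbd : ∀ t, |f t| ≤ M) (u v L : ℝ) :
    |(∫ t in u..u + L, f t) - ∫ t in v..v + L, f t| ≤ 2 * M * |u - v| := by
  rw [integral_interval_sub_interval_comm (hf _ _) (hf _ _) (hf _ _)]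
  calc |(∫ t in u..v, f t) - ∫ t in u + L..v + L, f t|
      ≤ |∫ t in u..v, f t| + |∫ t in u + L..v + L, f t| := abs_sub _ _
    _ ≤ M * |v - u| + M * |v + L - (u + L)| :=
        add_le_add (abs_integral_le_mul_abs_sub hbd _ _) (abs_integral_le_mul_abs_sub hbd _ _)
    _ = 2 * M * |u - v| := by rw [add_sub_add_right_eq_sub, abs_sub_comm]; ring

theorem integral_add_nat_mul_of_periodic (hf : ∀ a b, IntervalIntegrable f volume a b) {c : ℝ}
    (hper : Periodic (fun u => ∫ t in u..u + c, f t) c) (w : ℝ) (n : ℕ) :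
    ∫ t in w..w + n * c, f t = n * ∫ t in w..w + c, f t := by
  have hwindow (k : ℕ) :
      ∫ t in w + k * c..w + (k + 1 : ℕ) * c, f t = ∫ t in w..w + c, f t := by
    simpa only [Nat.cast_succ, add_one_mul, ← add_assoc] using hper.nat_mul k w
  have htelescope := sum_integral_adjacent_intervals (a := fun k : ℕ => w + k * c)
    (f := f) (μ := volume) (n := n) fun _ _ => hf _ _
  simp only [hwindow, Finset.sum_const, Finset.card_range, nsmul_eq_mul, Nat.cast_zero,
    zero_mul, add_zero] at htelescope
  exact htelescope.symm

end

/-- If f is continuous and bounded and g(u) := ∫_u^{u+1} f is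
1-periodic, then g is constant. -/
theorem periodic_window_integral_constant
    (f : ℝ → ℝ) (hf : Continuous f) (M : ℝ) (hbd : ∀ t : ℝ, |f t| ≤ M)
    (hper : ∀ u : ℝ, (∫ t in u..(u + 1), f t) = ∫ t in (u + 1)..(u + 2), f t) :
    ∀ u v : ℝ, (∫ t in u..(u + 1), f t) = ∫ t in v..(v + 1), f t := by
  intro u v
  have hperiodic : Periodic (fun u => ∫ t in u..u + 1, f t) 1 := fun w => by
    simpa only [add_assoc, one_add_one_eq_two] using (hper w).symm
  have hgrowth (n : ℕ) :
      n * |(∫ t in u..u + 1, f t) - ∫ t in v..v + 1, f t| ≤ 2 * M * |u - v| := by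
    have := abs_integral_translate_sub_le hf.intervalIntegrable hbd u v (n * 1)
    rwa [integral_add_nat_mul_of_periodic hf.intervalIntegrable hperiodic,
      integral_add_nat_mul_of_periodic hf.intervalIntegrable hperiodic, ← mul_sub, abs_mul,
      Nat.abs_cast] at this
  exact sub_eq_zero.mp (abs_nonpos_iff.mp (nonpos_of_forall_nat_mul_le hgrowth))
end

section
/- Let f : ℝ → ℝ be continuous and bounded and let T > 0. If for the Haar wavelet Wf(u, 2T) = 0 for all u ∈ ℝ, then the function G(u) := ∫_u^{u+T} f(t) dt is constant on ℝ. -/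
open MeasureTheory

/-!
With `F x = ∫ t in 0..x, f t`, the Haar coefficient at `(u, 2T)` is, up to the factor
`1 / √(2T)`, the difference `G u - G (u + T)` of the window integrals `G u = F (u + T) - F u`;
so `G` is `T`-periodic. Telescoping gives `F (u + n T) - F u = n G u`, hence
`n (G u - G v) = (F (u + n T) - F (v + n T)) - (F u - F v)`, which stays below `2 M |u - v|`
because `F` is `M`-Lipschitz. Letting `n → ∞` forces `G u = G v`.
-/

open Set Function

theorem haar_div_eq_indicator_sub_indicator {T : ℝ} (hT : 0 < T) (u t : ℝ) :
    haar ((t - u) / (2 * T)) =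
      (Ico u (u + T)).indicator 1 t - (Ico (u + T) (u + 2 * T)).indicator 1 t := by
  have h2T : 0 < 2 * T := by positivity
  simp only [haar, indicator, mem_Ico, le_div_iff₀ h2T, div_lt_iff₀ h2T, Pi.one_apply]
  split_ifs <;> grind

theorem integral_mul_haar_div {f : ℝ → ℝ} (hf : LocallyIntegrable f) {T : ℝ} (hT : 0 < T)
    (u : ℝ) :
    ∫ t, f t * haar ((t - u) / (2 * T)) =
      (∫ t in u..u + T, f t) - ∫ t in u + T..u + 2 * T, f t := by
  have hIco : ∀ a b, IntegrableOn f (Ico a b) :=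
    fun a b => (hf.integrableOn_isCompact isCompact_Icc).mono_set Ico_subset_Icc_self
  simp_rw [haar_div_eq_indicator_sub_indicator hT, mul_sub, ← indicator_mul_right, Pi.one_apply,
    mul_one]
  rw [integral_sub ((hIco _ _).integrable_indicator measurableSet_Ico)
    ((hIco _ _).integrable_indicator measurableSet_Ico), integral_indicator measurableSet_Ico,
    integral_indicator measurableSet_Ico, intervalIntegral.integral_of_le (by linarith),
    intervalIntegral.integral_of_le (by linarith), integral_Ico_eq_integral_Ioc,
    integral_Ico_eq_integral_Ioc]

theorem add_nat_mul_sub_eq_nat_mul_of_periodic {F : ℝ → ℝ} {T : ℝ}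
    (hper : Periodic (fun u => F (u + T) - F u) T) (u : ℝ) (n : ℕ) :
    F (u + n * T) - F u = n * (F (u + T) - F u) := by
  induction n with
  | zero => simp
  | succ n ih =>
    have hshift : F (u + n * T + T) - F (u + n * T) = F (u + T) - F u := hper.nat_mul n u
    rw [Nat.cast_succ, show u + (n + 1) * T = u + n * T + T by ring]
    linear_combination hshift + ih

theorem forward_difference_const_of_periodic_of_lipschitz {F : ℝ → ℝ} {T M : ℝ}
    (hF : ∀ x y, |F x - F y| ≤ M * |x - y|)
    (hper : Periodic (fun u => F (u + T) - F u) T) (u v : ℝ) :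
    F (u + T) - F u = F (v + T) - F v := by
  set d := (F (u + T) - F u) - (F (v + T) - F v)
  have hbound : ∀ n : ℕ, n * |d| ≤ 2 * M * |u - v| := by
    intro n
    have hshift : (n : ℝ) * d = (F (u + n * T) - F (v + n * T)) - (F u - F v) := by
      linear_combination (add_nat_mul_sub_eq_nat_mul_of_periodic hper v n) -
        add_nat_mul_sub_eq_nat_mul_of_periodic hper u n
    calc (n : ℝ) * |d| = |(F (u + n * T) - F (v + n * T)) - (F u - F v)| := by
          rw [← hshift, abs_mul, Nat.abs_cast]
      _ ≤ |F (u + n * T) - F (v + n * T)| + |F u - F v| := abs_sub _ _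
      _ ≤ M * |u + n * T - (v + n * T)| + M * |u - v| := add_le_add (hF _ _) (hF _ _)
      _ = 2 * M * |u - v| := by ring_nf
  by_contra hne
  have hpos : 0 < |d| := abs_pos.mpr (sub_ne_zero.mpr hne)
  obtain ⟨n, hn⟩ := exists_nat_gt (2 * M * |u - v| / |d|)
  linarith [hbound n, (div_lt_iff₀ hpos).mp hn]

/-- if f is continuous and bounded and its Haar CWT at scale 2T
vanishes for all u, then G(u) := ∫_u^{u+T} f is constant. -/
theorem haar_cwt_vanishes_implies_window_constant
    (f : ℝ → ℝ) (hf : Continuous f) (M : ℝ) (hbd : ∀ t : ℝ, |f t| ≤ M)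
    (T : ℝ) (hT : 0 < T)
    (hW : ∀ u : ℝ,
      (∫ t : ℝ, f t * haar ((t - u) / (2 * T)) / Real.sqrt (2 * T)) = 0) :
    ∀ u v : ℝ, (∫ t in u..(u + T), f t) = ∫ t in v..(v + T), f t := by
  set F : ℝ → ℝ := fun x => ∫ t in 0..x, f t
  have hwindow : ∀ u v, (∫ t in u..v, f t) = F v - F u := fun u v =>
    (intervalIntegral.integral_interval_sub_left (hf.intervalIntegrable 0 v)
      (hf.intervalIntegrable 0 u)).symm
  have hlip : ∀ x y, |F x - F y| ≤ M * |x - y| := fun x y => by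
    simpa only [← hwindow, ← Real.norm_eq_abs, norm_sub_rev x y] using
      intervalIntegral.norm_integral_le_of_norm_le_const (a := y) (b := x) fun t _ => hbd t
  have hper : Periodic (fun u => F (u + T) - F u) T := fun u => by
    have hsqrt : Real.sqrt (2 * T) ≠ 0 := by positivity
    have h := hW u
    rw [integral_div, div_eq_zero_iff, or_iff_left hsqrt,
      integral_mul_haar_div hf.locallyIntegrable hT, sub_eq_zero, hwindow, hwindow,
      two_mul, ← add_assoc] at h
    exact h.symm
  intro u v
  rw [hwindow, hwindow]
  exact forward_difference_const_of_periodic_of_lipschitz hlip hper u v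
end
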